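/- Every multi-scale quasiperiodic infinite word x is uniformly recurrent: for every finite word u occurring in x there exists n ≥ 1 such that every factor of x of length n contains at least one occurrence of u. -/

import Mathlib

open Filter MeasureTheory Topology

/-- The finite word `u` occurs in the infinite word `x` at position `i`. -/
def OccursAt {A : Type*} (x : ℕ → A) (u : List A) (i : ℕ) : Prop :=
  ∀ k : Fin u.length, x (i + k) = u.get k

/-- The finite word `u` is a factor of the infinite word `x`. -/
def IsFactor {A : Type*} (x : ℕ → A) (u : List A) : Prop :=
  ∃ i, OccursAt x u i

/-- `q` is a quasiperiod of the infinite word `x`: there is a strictly increasing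
sequence of occurrence positions of `q`, starting at `0`, with gaps at most `|q|`. -/
def IsQuasiperiod {A : Type*} (x : ℕ → A) (q : List A) : Prop :=
  ∃ i : ℕ → ℕ, StrictMono i ∧ i 0 = 0 ∧ (∀ n, OccursAt x q (i n)) ∧
    ∀ n, i (n + 1) - i n ≤ q.length

/-- An infinite word is multi-scale quasiperiodic if it has infinitely many quasiperiods. -/
def MultiScaleQuasiperiodic {A : Type*} (x : ℕ → A) : Prop :=
  {q : List A | IsQuasiperiod x q}.Infinite

/-- The word complexity `p_n(x)`: the number of distinct factors of `x` of length `n`. -/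
noncomputable def complexity {A : Type*} (x : ℕ → A) (n : ℕ) : ℕ :=
  Set.ncard {u : List A | u.length = n ∧ IsFactor x u}

/-- `#(u, x_{0→n-1})`: the number of occurrences of `u` in the length-`n` prefix of `x`. -/
noncomputable def occCount {A : Type*} (x : ℕ → A) (u : List A) (n : ℕ) : ℕ :=
  Set.ncard {i : ℕ | i + u.length ≤ n ∧ OccursAt x u i}

/-- `#(u, v)`: the number of occurrences of the finite word `u` in the finite word `v`. -/
noncomputable def countIn {A : Type*} (u v : List A) : ℕ :=
  Set.ncard {i : ℕ | i + u.length ≤ v.length ∧ u <+: v.drop i}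

/-- Starting position of the `n`-th block in the integration `∫_w x`:
the `k`-th block is `σ_w(x_k)`, of length `|w| - x_k`. -/
def blockStart {B : Type*} (w : List B) (x : ℕ → ℕ) : ℕ → ℕ
  | 0 => 0
  | n + 1 => blockStart w x n + (w.length - x n)

/-- The integration `∫_w x`: the infinite word `σ_w(x_0) σ_w(x_1) σ_w(x_2) ⋯`, where the
substitution `σ_w` sends a letter `i` to the prefix of `w` of length `|w| - i`. -/
noncomputable def integrate {B : Type*} (w : List B) (hw : w ≠ []) (x : ℕ → ℕ) (m : ℕ) : B :=
  w.get ⟨(m - blockStart w x (Nat.findGreatest (fun j => blockStart w x j ≤ m) m)) % w.length,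
    Nat.mod_lt _ (List.length_pos_of_ne_nil hw)⟩

/-- every multi-scale quasiperiodic word is uniformly recurrent. -/
theorem multiScaleQuasiperiodic_uniformly_recurrent {A : Type*} [Finite A]
    (x : ℕ → A) (h : MultiScaleQuasiperiodic x) :
    ∀ u : List A, IsFactor x u →
      ∃ n : ℕ, 1 ≤ n ∧ ∀ v : List A, v.length = n → IsFactor x v → u <:+: v := by
  intro u hu
  obtain ⟨i0, hoccu⟩ := hu
  -- pick a long quasiperiod
  obtain ⟨q, hq, hqlen⟩ :=
    h.exists_notMem_finite (List.finite_length_lt A (i0 + u.length + 1))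
  simp only [Set.mem_setOf_eq, not_lt] at hqlen
  have hlen : i0 + u.length + 1 ≤ q.length := hqlen
  obtain ⟨I, hmono, hI0, hoccq, hgap⟩ := hq
  set L := q.length with hL
  refine ⟨2 * L, by omega, ?_⟩
  intro v hvlen hvfac
  obtain ⟨j, hoccv⟩ := hvfac
  -- find an occurrence of q in [j, j+L]
  have hex : ∃ m, j ≤ I m := ⟨j, hmono.le_apply⟩
  set m := Nat.find hex with hm
  have hjm : j ≤ I m := Nat.find_spec hex
  have hup : I m ≤ j + L := by
    rcases Nat.eq_zero_or_pos m with h0 | h0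
    · have : I m = 0 := h0 ▸ hI0
      omega
    · obtain ⟨m', hm'⟩ := Nat.exists_eq_add_of_lt h0
      have hm2 : m = m' + 1 := by omega
      have h1 : ¬ j ≤ I m' := Nat.find_min hex (by omega)
      have h2 : I (m' + 1) - I m' ≤ L := hgap m'
      have h3 : I m' < I (m' + 1) := hmono (Nat.lt_succ_self m')
      rw [hm2]
      omega
  -- u occurs at position I m + i0
  have hqu : OccursAt x u (I m + i0) := by
    intro k
    have hk : i0 + (k : ℕ) < L := by have := k.2; omega
    have e1 := hoccq m ⟨i0 + k, hk⟩
    have e2 := hoccq 0 ⟨i0 + k, hk⟩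
    rw [hI0, Nat.zero_add] at e2
    have e3 := hoccu k
    simp only [List.get_eq_getElem] at e1 e2 e3 ⊢
    have ha : I m + i0 + (k : ℕ) = I m + (i0 + k) := by omega
    rw [ha, e1, ← e2, e3]
  -- u is the segment of v starting at d := I m + i0 - j
  set d := I m + i0 - j with hd
  have hjd : j + d = I m + i0 := by omega
  have hdl : d + u.length ≤ v.length := by rw [hvlen]; omega
  have hueq : u = (v.drop d).take u.length := by
    apply List.ext_getElem
    · simp only [List.length_take, List.length_drop]; omega
    · intro k h1 h2
      rw [List.getElem_take, List.getElem_drop]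
      have hk : d + k < v.length := by omega
      have e1 := hoccv ⟨d + k, hk⟩
      have e2 := hqu ⟨k, h1⟩
      simp only [List.get_eq_getElem] at e1 e2
      rw [← e1, ← e2]
      have : I m + i0 + k = j + (d + k) := by omega
      rw [this]
  rw [hueq]
  exact ((v.drop d).take_prefix u.length).isInfix.trans (v.drop_suffix d).isInfix
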